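/- arXiv:math/0209096 — 2 statements merged into one kernel-verified Lean document; each statement's English description precedes it below -/
import Mathlib

section
/- Let f : ℝⁿ → ℝⁿ be analytic with f(ζ) = 0 and Df(ζ) invertible; set γ = γ(f,ζ) and ν = ‖z - ζ‖·γ < 1 - √2/2. Then ‖Df(ζ)⁻¹(Df(z)(ζ - z) + f(z))‖ ≤ ν‖z - ζ‖/(1-ν)². -/
/-!
Put `g = Df(ζ)⁻¹ ∘ f`. The `k`-th Taylor coefficient of `g` at `ζ` has norm at most `γ^(k-1)`
for `k ≥ 2`, so the Taylor series of `g` converges on the ball of radius `1/γ`; since `g` is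
analytic on that (connected) ball, the identity theorem shows that the series represents `g`
there, which analyticity alone would not give over `ℝ`. As `g(ζ) = 0`, termwise differentiation
gives `Dg(z)(z - ζ) - g(z) = ∑_{k ≥ 1} k p_{k+1}(z - ζ)`, whose norm is at most
`‖z - ζ‖ ∑ k ν^k = ‖z - ζ‖ ν / (1 - ν)²`.
-/

noncomputable section

open Metric Filter

/-- The inverse of the derivative of `f` at `x` (zero if not invertible). -/
def dfInv {n : ℕ} (f : EuclideanSpace ℝ (Fin n) → EuclideanSpace ℝ (Fin n))
    (x : EuclideanSpace ℝ (Fin n)) :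
    EuclideanSpace ℝ (Fin n) →L[ℝ] EuclideanSpace ℝ (Fin n) :=
  Ring.inverse (fderiv ℝ f x)

/-- The term `‖Df(x)⁻¹ D^k f(x) / k!‖^(1/(k-1))` of Smale's gamma invariant. -/
def smaleTerm {n : ℕ} (f : EuclideanSpace ℝ (Fin n) → EuclideanSpace ℝ (Fin n))
    (x : EuclideanSpace ℝ (Fin n)) (k : ℕ) : ℝ :=
  (‖(dfInv f x).compContinuousMultilinearMap (iteratedFDeriv ℝ k f x)‖ /
      (Nat.factorial k : ℝ)) ^ ((1 : ℝ) / ((k : ℝ) - 1))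

/-- Smale's gamma invariant `γ(f,x) = sup_{k ≥ 2} ‖Df(x)⁻¹ D^k f(x)/k!‖^(1/(k-1))`. -/
def smaleGamma {n : ℕ} (f : EuclideanSpace ℝ (Fin n) → EuclideanSpace ℝ (Fin n))
    (x : EuclideanSpace ℝ (Fin n)) : ℝ :=
  ⨆ k : ℕ, smaleTerm f x (k + 2)

/-- Smale's beta invariant `β(f,x) = ‖Df(x)⁻¹ f(x)‖`, the Newton step length. -/
def smaleBeta {n : ℕ} (f : EuclideanSpace ℝ (Fin n) → EuclideanSpace ℝ (Fin n))
    (x : EuclideanSpace ℝ (Fin n)) : ℝ :=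
  ‖dfInv f x (f x)‖

/-- The Newton operator `N_f(x) = x - Df(x)⁻¹ f(x)`. -/
def newton {n : ℕ} (f : EuclideanSpace ℝ (Fin n) → EuclideanSpace ℝ (Fin n))
    (x : EuclideanSpace ℝ (Fin n)) : EuclideanSpace ℝ (Fin n) :=
  x - dfInv f x (f x)

/-- `ψ(u) = 1 - 4u + 2u²`. -/
def psi (u : ℝ) : ℝ := 1 - 4 * u + 2 * u ^ 2

open scoped ENNReal Nat

namespace ENNReal

theorem ofReal_lt_inv_ofReal_iff {a b : ℝ} (ha : 0 ≤ a) :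
    ENNReal.ofReal a < (ENNReal.ofReal b)⁻¹ ↔ a * b < 1 := by
  rw [← one_div, ENNReal.lt_div_iff_mul_lt (.inr ofReal_ne_top) (.inl ofReal_ne_top),
    ← ofReal_mul ha, ofReal_lt_one]

end ENNReal

section Taylor

variable {𝕜 E F : Type*} [NontriviallyNormedField 𝕜]
  [NormedAddCommGroup E] [NormedSpace 𝕜 E] [NormedAddCommGroup F] [NormedSpace 𝕜 F]

variable (𝕜) in
/-- Unlike `ftaylorSeries`, the coefficients are divided by `k!`, so that this is the power
series of `f` at `x` whenever `f` is analytic there. -/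
def taylorSeries (f : E → F) (x : E) : FormalMultilinearSeries 𝕜 E F :=
  fun k => (k ! : 𝕜)⁻¹ • iteratedFDeriv 𝕜 k f x

theorem AnalyticAt.hasFPowerSeriesAt_taylorSeries [CharZero 𝕜] [CompleteSpace F]
    {f : E → F} {x : E} (hf : AnalyticAt 𝕜 f x) (hr : 0 < (taylorSeries 𝕜 f x).radius) :
    HasFPowerSeriesAt f (taylorSeries 𝕜 f x) x := by
  obtain ⟨q, r, hq⟩ := hf
  exact ⟨min r (taylorSeries 𝕜 f x).radius,
    { r_le := min_le_right _ _
      r_pos := lt_min hq.r_pos hr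
      hasSum := fun hy =>
        hq.hasSum_iteratedFDeriv (eball_subset_eball (min_le_left _ _) hy) }⟩

theorem FormalMultilinearSeries.inv_le_radius_of_norm_le_pow (p : FormalMultilinearSeries 𝕜 E F)
    {γ : ℝ} (hp : ∀ k, ‖p (k + 2)‖ ≤ γ ^ (k + 1)) : (ENNReal.ofReal γ)⁻¹ ≤ p.radius := by
  refine ENNReal.le_of_forall_nnreal_lt fun r hr => ?_
  rw [← ENNReal.ofReal_coe_nnreal, ENNReal.ofReal_lt_inv_ofReal_iff r.coe_nonneg] at hr
  refine p.le_radius_of_bound (max (max ‖p 0‖ (‖p 1‖ * r)) r) fun k => ?_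
  match k with
  | 0 => simp
  | 1 => simp
  | k + 2 =>
    have hγ : 0 ≤ γ := (norm_nonneg _).trans (by simpa using hp 0)
    calc ‖p (k + 2)‖ * (r : ℝ) ^ (k + 2) ≤ γ ^ (k + 1) * (r : ℝ) ^ (k + 2) := by gcongr; exact hp k
      _ = (r * γ) ^ (k + 1) * r := by ring
      _ ≤ r := mul_le_of_le_one_left r.coe_nonneg (pow_le_one₀ (by positivity) hr.le)
      _ ≤ _ := le_max_right _ _

theorem HasFPowerSeriesOnBall.hasSum_fderiv_apply_sub [CompleteSpace F] {f : E → F}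
    {p : FormalMultilinearSeries 𝕜 E F} {x y : E} {r : ℝ≥0∞}
    (h : HasFPowerSeriesOnBall f p x r) (hfx : f x = 0) (hy : y ∈ eball (0 : E) r) :
    HasSum (fun k => k • p (k + 1) (fun _ => y)) (fderiv 𝕜 f (x + y) y - f (x + y)) := by
  have hderiv : HasSum (fun k => (k + 1) • p (k + 1) (fun _ => y)) (fderiv 𝕜 f (x + y) y) := by
    simpa only [ContinuousLinearMap.apply_apply, p.derivSeries_apply_diag] using
      (ContinuousLinearMap.apply 𝕜 F y).hasSum (h.fderiv.hasSum hy)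
  have hvalue : HasSum (fun k => p (k + 1) (fun _ => y)) (f (x + y)) := by
    simpa [h.coeff_zero, hfx] using (hasSum_nat_add_iff' 1).mpr (h.hasSum hy)
  convert hderiv.sub hvalue using 2 with k
  rw [succ_nsmul, add_sub_cancel_right]

theorem HasFPowerSeriesOnBall.norm_fderiv_apply_sub_le [CompleteSpace F] {f : E → F}
    {p : FormalMultilinearSeries 𝕜 E F} {x y : E} {r : ℝ≥0∞} {γ : ℝ}
    (h : HasFPowerSeriesOnBall f p x r) (hfx : f x = 0) (hp : ∀ k, ‖p (k + 2)‖ ≤ γ ^ (k + 1))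
    (hy : y ∈ eball (0 : E) r) (hν : ‖y‖ * γ < 1) :
    ‖fderiv 𝕜 f (x + y) y - f (x + y)‖ ≤ ‖y‖ * (‖y‖ * γ / (1 - ‖y‖ * γ) ^ 2) := by
  set ν := ‖y‖ * γ with hν_def
  have hν0 : 0 ≤ ν := mul_nonneg (norm_nonneg y) ((norm_nonneg _).trans (by simpa using hp 0))
  have hterm : ∀ k : ℕ, ‖k • p (k + 1) (fun _ => y)‖ ≤ ‖y‖ * (k * ν ^ k) := by
    rintro (_ | k)
    · simp
    calc ‖(k + 1) • p (k + 2) (fun _ => y)‖ ≤ (k + 1 : ℕ) * (‖p (k + 2)‖ * ‖y‖ ^ (k + 2)) := by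
          refine (norm_nsmul_le ..).trans ?_
          gcongr
          simpa using (p (k + 2)).le_opNorm (fun _ => y)
      _ ≤ (k + 1 : ℕ) * (γ ^ (k + 1) * ‖y‖ ^ (k + 2)) := by gcongr; exact hp k
      _ = ‖y‖ * ((k + 1 : ℕ) * ν ^ (k + 1)) := by rw [hν_def, mul_pow]; ring
  have hmajorant : HasSum (fun k : ℕ => ‖y‖ * (k * ν ^ k)) (‖y‖ * (ν / (1 - ν) ^ 2)) :=
    (hasSum_coe_mul_geometric_of_norm_lt_one (r := ν) (by rwa [Real.norm_of_nonneg hν0])).mul_left _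
  exact (h.hasSum_fderiv_apply_sub hfx hy).norm_le_of_bounded hmajorant hterm

end Taylor

theorem AnalyticOnNhd.hasFPowerSeriesOnBall_taylorSeries {E F : Type*}
    [NormedAddCommGroup E] [NormedSpace ℝ E] [NormedAddCommGroup F] [NormedSpace ℝ F]
    [CompleteSpace F] {f : E → F} {x : E}
    (hf : AnalyticOnNhd ℝ f (eball x (taylorSeries ℝ f x).radius))
    (hr : 0 < (taylorSeries ℝ f x).radius) :
    HasFPowerSeriesOnBall f (taylorSeries ℝ f x) x (taylorSeries ℝ f x).radius := by
  set p := taylorSeries ℝ f x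
  have hsum : HasFPowerSeriesOnBall (fun w => p.sum (w - x)) p x p.radius := by
    simpa using (p.hasFPowerSeriesOnBall hr).comp_sub x
  refine hsum.congr (hf.eqOn_of_preconnected_of_eventuallyEq hsum.analyticOnNhd
    isPreconnected_eball (mem_eball_self hr) ?_).symm
  have hlocal := (hf x (mem_eball_self hr)).hasFPowerSeriesAt_taylorSeries hr
  filter_upwards [hlocal.eventually_hasSum_sub] with w hw using hw.tsum_eq.symm

theorem norm_taylorSeries_dfInv_comp_eq_smaleTerm_pow {n : ℕ}
    {f : EuclideanSpace ℝ (Fin n) → EuclideanSpace ℝ (Fin n)} {x : EuclideanSpace ℝ (Fin n)}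
    (hf : AnalyticAt ℝ f x) (k : ℕ) :
    ‖taylorSeries ℝ (dfInv f x ∘ f) x (k + 2)‖ = smaleTerm f x (k + 2) ^ (k + 1) := by
  have hexp : (1 : ℝ) / (((k + 2 : ℕ) : ℝ) - 1) = ((k + 1 : ℕ) : ℝ)⁻¹ := by push_cast; ring
  rw [smaleTerm, hexp, Real.rpow_inv_natCast_pow (by positivity) k.succ_ne_zero, taylorSeries,
    norm_smul, (dfInv f x).iteratedFDeriv_comp_left hf.contDiffAt le_top, norm_inv,
    RCLike.norm_natCast, inv_mul_eq_div]

theorem linearization_error_bound_general {n : ℕ}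
    (f : EuclideanSpace ℝ (Fin n) → EuclideanSpace ℝ (Fin n))
    (hf : ∀ w, AnalyticAt ℝ f w)
    (ζ z : EuclideanSpace ℝ (Fin n))
    (hζ : f ζ = 0)
    (hfin : BddAbove (Set.range fun k : ℕ => smaleTerm f ζ (k + 2)))
    (hν : ‖z - ζ‖ * smaleGamma f ζ < 1 - Real.sqrt 2 / 2) :
    ‖dfInv f ζ (fderiv ℝ f z (ζ - z) + f z)‖ ≤
      (‖z - ζ‖ * smaleGamma f ζ) * ‖z - ζ‖ /
        (1 - ‖z - ζ‖ * smaleGamma f ζ) ^ 2 := by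
  set γ := smaleGamma f ζ
  set g := dfInv f ζ ∘ f
  set p := taylorSeries ℝ g ζ
  have hg : ∀ w, AnalyticAt ℝ g w := fun w => ((dfInv f ζ).analyticAt _).comp (hf w)
  have hp : ∀ k, ‖p (k + 2)‖ ≤ γ ^ (k + 1) := fun k => by
    rw [norm_taylorSeries_dfInv_comp_eq_smaleTerm_pow (hf ζ)]
    exact pow_le_pow_left₀ (Real.rpow_nonneg (by positivity) _) (le_ciSup hfin k) _
  have hν1 : ‖z - ζ‖ * γ < 1 := hν.trans_le (by linarith [Real.sqrt_nonneg 2])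
  have hradius : ‖z - ζ‖ₑ < p.radius := by
    refine lt_of_lt_of_le ?_ (p.inv_le_radius_of_norm_le_pow hp)
    rwa [← ofReal_norm, ENNReal.ofReal_lt_inv_ofReal_iff (norm_nonneg _)]
  have hball := AnalyticOnNhd.hasFPowerSeriesOnBall_taylorSeries (fun w _ => hg w)
    (pos_of_gt hradius)
  have hbound := hball.norm_fderiv_apply_sub_le (by simp [g, hζ]) hp
    (by simpa [mem_eball, edist_zero_right] using hradius) hν1
  rw [add_sub_cancel] at hbound
  have hfderiv : fderiv ℝ g z = (dfInv f ζ).comp (fderiv ℝ f z) :=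
    ((dfInv f ζ).hasFDerivAt.comp z (hf z).differentiableAt.hasFDerivAt).fderiv
  calc ‖dfInv f ζ (fderiv ℝ f z (ζ - z) + f z)‖ = ‖fderiv ℝ g z (z - ζ) - g z‖ := by
        rw [← norm_neg (fderiv ℝ g z _ - g z)]
        congr 1
        simp only [hfderiv, g, ContinuousLinearMap.comp_apply, Function.comp_apply, ← neg_sub z ζ,
          map_neg, map_add]
        abel
    _ ≤ _ := hbound
    _ = _ := by ring

/-- Lemma 3 (flat case): if `f(ζ) = 0`, `Df(ζ)` invertible and
`ν = ‖z-ζ‖γ(f,ζ) < 1-√2/2`, then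
`‖Df(ζ)⁻¹(Df(z)(ζ-z) + f(z))‖ ≤ ν‖z-ζ‖/(1-ν)²`. -/
theorem linearization_error_bound {n : ℕ}
    (f : EuclideanSpace ℝ (Fin n) → EuclideanSpace ℝ (Fin n))
    (hf : ∀ w, AnalyticAt ℝ f w)
    (ζ z : EuclideanSpace ℝ (Fin n))
    (hζ : f ζ = 0)
    (hinv : IsUnit (fderiv ℝ f ζ))
    (hfin : BddAbove (Set.range fun k : ℕ => smaleTerm f ζ (k + 2)))
    (hν : ‖z - ζ‖ * smaleGamma f ζ < 1 - Real.sqrt 2 / 2) :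
    ‖dfInv f ζ (fderiv ℝ f z (ζ - z) + f z)‖ ≤
      (‖z - ζ‖ * smaleGamma f ζ) * ‖z - ζ‖ /
        (1 - ‖z - ζ‖ * smaleGamma f ζ) ^ 2 :=
  linearization_error_bound_general f hf ζ z hζ hfin hν
end
end

section
/- Let f : ℝⁿ → ℝⁿ be analytic, z ∈ ℝⁿ with Df(z) invertible, and let z₁ be any point with ν = ‖z - z₁‖·γ(f,z) < 1 - √2/2. Then γ(f,z₁) ≤ γ(f,z) / ((1-ν)·ψ(ν)), where ψ(ν) = 1 - 4ν + 2ν². -/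
/-!
Normalize by `A = Df(z)⁻¹`: the map `g = A ∘ f` has `Dg(z) = 1` and `‖D^k g(z)‖ ≤ k! γ^(k-1)`,
`γ = γ(f, z)`. The Taylor series of `D^k g` at `z` is then dominated by
`k! γ^(k-1) ∑ₗ C(l+k, k) (γ‖y‖)^l`, so it converges on the ball of radius `1/γ`, where it equals
`D^k g` by the identity theorem. With `u = ‖z - z₁‖ γ` this gives
`‖D^k g(z₁)‖ ≤ k! γ^(k-1) / (1-u)^(k+1)` and `‖Dg(z₁) - 1‖ ≤ (1-u)⁻² - 1`, which is `< 1` exactly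
when `u < 1 - √2/2`; a Neumann series then bounds `‖Dg(z₁)⁻¹‖` by `(1-u)² / ψ(u)`. Since
`Df(z₁)⁻¹ D^k f(z₁) = Dg(z₁)⁻¹ D^k g(z₁)`, the `k`-th term of `γ(f, z₁)` is at most
`γ / ((1-u) ψ(u)^(1/(k-1))) ≤ γ / ((1-u) ψ(u))`.
-/

noncomputable section

open Metric Filter

open Set Nat
open scoped ContDiff

section Taylor

variable {𝕜 E F : Type*} [RCLike 𝕜] [NormedAddCommGroup E] [NormedSpace 𝕜 E]
  [NormedAddCommGroup F] [NormedSpace 𝕜 F]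

theorem norm_iteratedFDeriv_iteratedFDeriv (h : E → F) (k l : ℕ) (x : E) :
    ‖iteratedFDeriv 𝕜 l (iteratedFDeriv 𝕜 k h) x‖ = ‖iteratedFDeriv 𝕜 (k + l) h x‖ := by
  induction l generalizing k with
  | zero => simp
  | succ l ih =>
    rw [← norm_iteratedFDeriv_fderiv, fderiv_iteratedFDeriv,
      LinearIsometryEquiv.norm_iteratedFDeriv_comp_left, ih, add_right_comm, add_assoc]

variable {h : E → F} {z y : E} {M γ : ℝ} {k : ℕ}

theorem norm_inv_factorial_smul_iteratedFDeriv_le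
    (hc : ∀ l, ‖iteratedFDeriv 𝕜 l h z‖ / l ! ≤ M * ((l + k).choose k * γ ^ l)) (l : ℕ) :
    ‖(l ! : 𝕜)⁻¹ • iteratedFDeriv 𝕜 l h z fun _ ↦ y‖ ≤ M * ((l + k).choose k * (γ * ‖y‖) ^ l) := by
  calc ‖(l ! : 𝕜)⁻¹ • iteratedFDeriv 𝕜 l h z fun _ ↦ y‖
      ≤ ‖iteratedFDeriv 𝕜 l h z‖ / l ! * ‖y‖ ^ l := by
        rw [norm_smul, norm_inv, RCLike.norm_natCast, div_eq_inv_mul, mul_assoc]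
        gcongr
        simpa using (iteratedFDeriv 𝕜 l h z).le_opNorm fun _ ↦ y
    _ ≤ M * ((l + k).choose k * γ ^ l) * ‖y‖ ^ l := by gcongr; exact hc l
    _ = M * ((l + k).choose k * (γ * ‖y‖) ^ l) := by ring

variable [CompleteSpace F]

theorem AnalyticOnNhd.hasSum_iteratedFDeriv_of_summable {ρ : ℝ}
    (hh : AnalyticOnNhd 𝕜 h (ball z ρ))
    (hs : Summable fun l ↦ ‖iteratedFDeriv 𝕜 l h z‖ / l ! * ρ ^ l) (hy : ‖y‖ < ρ) :
    HasSum (fun l ↦ (l ! : 𝕜)⁻¹ • iteratedFDeriv 𝕜 l h z fun _ ↦ y) (h (z + y)) := by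
  let _ : NormedSpace ℝ E := NormedSpace.restrictScalars ℝ 𝕜 E
  have hρ : 0 < ρ := (norm_nonneg y).trans_lt hy
  let p : FormalMultilinearSeries 𝕜 E F := fun l ↦ (l ! : 𝕜)⁻¹ • iteratedFDeriv 𝕜 l h z
  have hrad : ENNReal.ofReal ρ ≤ p.radius := p.le_radius_of_summable_norm <| by
    simpa [p, norm_smul, div_eq_inv_mul, hρ.le] using hs
  have hball : ball (0 : E) ρ ⊆ eball 0 p.radius := by
    rw [← eball_ofReal]; exact eball_subset_eball hrad
  -- `p` sums to `h (z + ·)` near `0`, hence on the whole ball by the identity theorem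
  have hshift : AnalyticOnNhd 𝕜 (fun w ↦ h (z + w)) (ball 0 ρ) := fun w hw ↦
    (hh (z + w) (by simpa using hw)).comp (analyticAt_const.add analyticAt_id)
  have hsum : AnalyticOnNhd 𝕜 p.sum (ball 0 ρ) := fun w hw ↦
    (p.hasFPowerSeriesOnBall ((ENNReal.ofReal_pos.2 hρ).trans_le hrad)).analyticOnNhd w (hball hw)
  have hnear : (fun w ↦ h (z + w)) =ᶠ[nhds 0] p.sum := by
    obtain ⟨q, r, hq⟩ := hh z (mem_ball_self hρ)
    filter_upwards [eball_mem_nhds 0 hq.r_pos, isOpen_ball.mem_nhds (mem_ball_self hρ)]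
      with w hwr hwρ
    exact (hq.hasSum_iteratedFDeriv hwr).unique (p.hasSum (hball hwρ))
  have hy0 : y ∈ ball (0 : E) ρ := mem_ball_zero_iff.2 hy
  have heq := hshift.eqOn_of_preconnected_of_eventuallyEq hsum (convex_ball 0 ρ).isPreconnected
    (mem_ball_self hρ) hnear hy0
  have := p.hasSum (hball hy0)
  rwa [← heq] at this

theorem hasSum_iteratedFDeriv_of_le_choose_mul_pow (hh : AnalyticOnNhd 𝕜 h univ) (hγ : 0 ≤ γ)
    (hc : ∀ l, ‖iteratedFDeriv 𝕜 l h z‖ / l ! ≤ M * ((l + k).choose k * γ ^ l))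
    (hu : γ * ‖y‖ < 1) :
    HasSum (fun l ↦ (l ! : 𝕜)⁻¹ • iteratedFDeriv 𝕜 l h z fun _ ↦ y) (h (z + y)) := by
  have hM : 0 ≤ M := by simpa using (div_nonneg (norm_nonneg _) (by positivity)).trans (hc 0)
  -- any `ρ` with `‖y‖ < ρ < 1 / γ` will do
  set ρ := ‖y‖ + (1 - γ * ‖y‖) / (γ + 1) with hρ
  have hδ : 0 < (1 - γ * ‖y‖) / (γ + 1) := div_pos (by linarith) (by linarith)
  have hγρ : γ * ρ = 1 - (1 - γ * ‖y‖) / (γ + 1) := by rw [hρ]; field_simp; ring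
  refine (hh.mono (subset_univ _)).hasSum_iteratedFDeriv_of_summable ?_ (lt_add_of_pos_right _ hδ)
  refine .of_nonneg_of_le (fun l ↦ by positivity) (fun l ↦ ?_)
    ((summable_choose_mul_geometric_of_norm_lt_one k
      (r := γ * ρ) (by rw [Real.norm_of_nonneg (by positivity)]; linarith)).mul_left M)
  calc ‖iteratedFDeriv 𝕜 l h z‖ / l ! * ρ ^ l ≤ M * ((l + k).choose k * γ ^ l) * ρ ^ l := by
        gcongr; exact hc l
    _ = M * ((l + k).choose k * (γ * ρ) ^ l) := by rw [mul_pow]; ring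

theorem norm_le_of_le_choose_mul_pow (hh : AnalyticOnNhd 𝕜 h univ) (hγ : 0 ≤ γ)
    (hc : ∀ l, ‖iteratedFDeriv 𝕜 l h z‖ / l ! ≤ M * ((l + k).choose k * γ ^ l))
    (hu : γ * ‖y‖ < 1) :
    ‖h (z + y)‖ ≤ M * (1 / (1 - γ * ‖y‖) ^ (k + 1)) :=
  (hasSum_iteratedFDeriv_of_le_choose_mul_pow hh hγ hc hu).norm_le_of_bounded
    ((hasSum_choose_mul_geometric_of_norm_lt_one k
      (by rwa [Real.norm_of_nonneg (by positivity)])).mul_left M)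
    (norm_inv_factorial_smul_iteratedFDeriv_le hc)

theorem norm_sub_le_of_le_choose_mul_pow (hh : AnalyticOnNhd 𝕜 h univ) (hγ : 0 ≤ γ)
    (hc : ∀ l, ‖iteratedFDeriv 𝕜 l h z‖ / l ! ≤ M * ((l + k).choose k * γ ^ l))
    (hu : γ * ‖y‖ < 1) :
    ‖h (z + y) - h z‖ ≤ M * (1 / (1 - γ * ‖y‖) ^ (k + 1)) - M := by
  have hsum := (hasSum_nat_add_iff' 1).2 (hasSum_iteratedFDeriv_of_le_choose_mul_pow hh hγ hc hu)
  have hmaj := (hasSum_nat_add_iff' 1).2 ((hasSum_choose_mul_geometric_of_norm_lt_one k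
      (r := γ * ‖y‖) (by rwa [Real.norm_of_nonneg (by positivity)])).mul_left M)
  simp only [Finset.sum_range_one, factorial_zero, cast_one, inv_one, one_smul,
    iteratedFDeriv_zero_apply, zero_add, choose_self, pow_zero, mul_one] at hsum hmaj
  exact hsum.norm_le_of_bounded hmaj fun l ↦ norm_inv_factorial_smul_iteratedFDeriv_le hc (l + 1)

end Taylor

theorem norm_ring_inverse_le_of_norm_one_sub_le {R : Type*} [NormedRing R]
    [HasSummableGeomSeries R] (h1 : ‖(1 : R)‖ ≤ 1) {a : R} {ε : ℝ} (ha : ‖1 - a‖ ≤ ε)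
    (hε : ε < 1) : ‖Ring.inverse a‖ ≤ (1 - ε)⁻¹ := by
  have ha1 : ‖1 - a‖ < 1 := ha.trans_lt hε
  have hgeom := tsum_geometric_le_of_norm_lt_one (1 - a) ha1
  rw [geom_series_eq_inverse _ ha1, sub_sub_cancel] at hgeom
  calc ‖Ring.inverse a‖ ≤ (1 - ‖1 - a‖)⁻¹ := by linarith
    _ ≤ (1 - ε)⁻¹ := by gcongr

section Normalized

variable {E F : Type*} [NormedAddCommGroup E] [NormedSpace ℝ E] [NormedAddCommGroup F]
  [NormedSpace ℝ F] {g : E → F} {z y : E} {γ : ℝ}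

theorem norm_iteratedFDeriv_div_factorial_le
    (hA : ∀ m, ‖iteratedFDeriv ℝ (m + 1) g z‖ ≤ (m + 1)! * γ ^ m) (k l : ℕ) :
    ‖iteratedFDeriv ℝ (k + 1 + l) g z‖ / l ! ≤
      (k + 1)! * γ ^ k * ((l + (k + 1)).choose (k + 1) * γ ^ l) := by
  have hfac : ((k + 1 + l)! : ℝ) = (l + (k + 1)).choose (k + 1) * l ! * (k + 1)! := by
    rw [add_comm (k + 1) l]; exact_mod_cast (add_choose_mul_factorial_mul_factorial l (k + 1)).symm
  rw [div_le_iff₀ (by positivity)]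
  calc ‖iteratedFDeriv ℝ (k + 1 + l) g z‖ ≤ (k + 1 + l)! * γ ^ (k + l) := by
        rw [add_right_comm]; exact hA (k + l)
    _ = (k + 1)! * γ ^ k * ((l + (k + 1)).choose (k + 1) * γ ^ l) * l ! := by
        rw [hfac, pow_add]; ring

variable [CompleteSpace F] {z₁ : E}

theorem norm_iteratedFDeriv_le_of_le_factorial_mul_pow (hg : AnalyticOnNhd ℝ g univ)
    (hγ : 0 ≤ γ) (hA : ∀ m, ‖iteratedFDeriv ℝ (m + 1) g z‖ ≤ (m + 1)! * γ ^ m)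
    (hu : ‖z - z₁‖ * γ < 1) (k : ℕ) :
    ‖iteratedFDeriv ℝ (k + 1) g z₁‖ ≤ (k + 1)! * γ ^ k * (1 / (1 - ‖z - z₁‖ * γ) ^ (k + 2)) := by
  rw [mul_comm ‖z - z₁‖ γ, norm_sub_rev z z₁] at hu ⊢
  have := norm_le_of_le_choose_mul_pow (hg.iteratedFDeriv (k + 1)) hγ (fun l ↦ by
    rw [norm_iteratedFDeriv_iteratedFDeriv]; exact norm_iteratedFDeriv_div_factorial_le hA k l) hu
  rwa [add_sub_cancel] at this

theorem norm_fderiv_sub_le_of_le_factorial_mul_pow (hg : AnalyticOnNhd ℝ g univ)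
    (hγ : 0 ≤ γ) (hA : ∀ m, ‖iteratedFDeriv ℝ (m + 1) g z‖ ≤ (m + 1)! * γ ^ m)
    (hu : ‖z - z₁‖ * γ < 1) :
    ‖fderiv ℝ g z₁ - fderiv ℝ g z‖ ≤ 1 / (1 - ‖z - z₁‖ * γ) ^ 2 - 1 := by
  rw [mul_comm ‖z - z₁‖ γ, norm_sub_rev z z₁] at hu ⊢
  have := norm_sub_le_of_le_choose_mul_pow (z := z) (M := 1) (k := 1) hg.fderiv hγ
    (fun l ↦ by
      have := norm_iteratedFDeriv_div_factorial_le hA 0 l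
      rw [zero_add, add_comm 1 l] at this
      simpa [norm_iteratedFDeriv_fderiv] using this) hu
  rwa [add_sub_cancel, one_mul] at this

end Normalized

theorem psi_pos {u : ℝ} (hu : u < 1 - √2 / 2) : 0 < psi u := by
  have h2 : √2 ^ 2 = 2 := Real.sq_sqrt zero_le_two
  have : √2 < 2 * (1 - u) := by linarith
  unfold psi
  nlinarith [Real.sqrt_nonneg 2]

theorem psi_le_one {u : ℝ} (h0 : 0 ≤ u) (h2 : u ≤ 2) : psi u ≤ 1 := by
  unfold psi; nlinarith

theorem norm_ring_inverse_fderiv_le_of_le_factorial_mul_pow {E : Type*} [NormedAddCommGroup E]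
    [NormedSpace ℝ E] [CompleteSpace E] {g : E → E} {z z₁ : E} {γ : ℝ}
    (hg : AnalyticOnNhd ℝ g univ) (hγ : 0 ≤ γ)
    (hA : ∀ m, ‖iteratedFDeriv ℝ (m + 1) g z‖ ≤ (m + 1)! * γ ^ m) (hgz : fderiv ℝ g z = 1)
    (hu : ‖z - z₁‖ * γ < 1 - √2 / 2) :
    ‖Ring.inverse (fderiv ℝ g z₁)‖ ≤ (1 - ‖z - z₁‖ * γ) ^ 2 / psi (‖z - z₁‖ * γ) := by
  set u := ‖z - z₁‖ * γ
  have hψ := psi_pos hu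
  have h1u : 0 < 1 - u := by linarith [Real.sqrt_nonneg 2]
  have hε : 1 / (1 - u) ^ 2 - 1 < 1 := by
    rw [sub_lt_iff_lt_add, div_lt_iff₀ (by positivity)]; unfold psi at hψ; nlinarith
  calc ‖Ring.inverse (fderiv ℝ g z₁)‖ ≤ (1 - (1 / (1 - u) ^ 2 - 1))⁻¹ :=
        norm_ring_inverse_le_of_norm_one_sub_le ContinuousLinearMap.norm_id_le
          (by rw [norm_sub_rev, ← hgz]
              exact norm_fderiv_sub_le_of_le_factorial_mul_pow hg hγ hA (by linarith)) hε
    _ = (1 - u) ^ 2 / psi u := by unfold psi; field_simp; ring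

section Euclidean

variable {n : ℕ} {f : EuclideanSpace ℝ (Fin n) → EuclideanSpace ℝ (Fin n)}
  {x z : EuclideanSpace ℝ (Fin n)}

theorem smaleTerm_le_iff {c : ℝ} (hc : 0 ≤ c) (m : ℕ) :
    smaleTerm f x (m + 2) ≤ c ↔
      ‖(dfInv f x).compContinuousMultilinearMap (iteratedFDeriv ℝ (m + 2) f x)‖ / (m + 2)! ≤
        c ^ (m + 1) := by
  have hexp : (1 : ℝ) / (((m + 2 : ℕ) : ℝ) - 1) = ((m + 1 : ℕ) : ℝ)⁻¹ := by push_cast; ring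
  rw [smaleTerm, hexp, Real.rpow_inv_le_iff_of_pos (by positivity) hc (by positivity),
    Real.rpow_natCast]

theorem smaleGamma_nonneg : 0 ≤ smaleGamma f x :=
  Real.iSup_nonneg fun _ ↦ Real.rpow_nonneg (by positivity) _

theorem fderiv_dfInv_comp (hf : Differentiable ℝ f) (x : EuclideanSpace ℝ (Fin n)) :
    fderiv ℝ (dfInv f z ∘ f) x = dfInv f z * fderiv ℝ f x := by
  rw [fderiv_comp x (dfInv f z).differentiableAt (hf x), ContinuousLinearMap.fderiv]; rfl

theorem fderiv_dfInv_comp_self (hf : Differentiable ℝ f) (hinv : IsUnit (fderiv ℝ f z)) :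
    fderiv ℝ (dfInv f z ∘ f) z = 1 := by
  rw [fderiv_dfInv_comp hf, dfInv, Ring.inverse_mul_cancel _ hinv]

theorem norm_iteratedFDeriv_dfInv_comp_le (hf : ContDiff ℝ ∞ f) (hinv : IsUnit (fderiv ℝ f z))
    (hfin : BddAbove (range fun k : ℕ ↦ smaleTerm f z (k + 2))) (m : ℕ) :
    ‖iteratedFDeriv ℝ (m + 1) (dfInv f z ∘ f) z‖ ≤ (m + 1)! * smaleGamma f z ^ m := by
  rcases m with _ | m
  · rw [norm_iteratedFDeriv_one, fderiv_dfInv_comp_self (hf.differentiable (by simp)) hinv]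
    exact ContinuousLinearMap.norm_id_le.trans (by simp)
  · rw [(dfInv f z).iteratedFDeriv_comp_left hf.contDiffAt (mod_cast le_top),
      ← div_le_iff₀' (by positivity)]
    exact (smaleTerm_le_iff smaleGamma_nonneg m).1 (le_ciSup hfin m)

theorem dfInv_compContinuousMultilinearMap_eq (hf : ContDiff ℝ ∞ f)
    (hinv : IsUnit (fderiv ℝ f z)) (x : EuclideanSpace ℝ (Fin n)) (k : ℕ) :
    (dfInv f x).compContinuousMultilinearMap (iteratedFDeriv ℝ k f x) =
      (Ring.inverse (fderiv ℝ (dfInv f z ∘ f) x)).compContinuousMultilinearMap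
        (iteratedFDeriv ℝ k (dfInv f z ∘ f) x) := by
  have hfx : fderiv ℝ f x = fderiv ℝ f z * (dfInv f z * fderiv ℝ f x) := by
    rw [← mul_assoc, dfInv, Ring.mul_inverse_cancel _ hinv, one_mul]
  rw [fderiv_dfInv_comp (hf.differentiable (by simp)),
    (dfInv f z).iteratedFDeriv_comp_left hf.contDiffAt (mod_cast le_top)]
  conv_lhs => rw [dfInv, hfx, Ring.inverse_mul (Or.inl hinv)]
  rfl

end Euclidean

/-- Lemma 8 (flat case), second estimate: if `Df(z)` is invertible and
`ν = ‖z - z₁‖γ(f,z) < 1-√2/2`, then `γ(f,z₁) ≤ γ(f,z)/((1-ν)ψ(ν))`. -/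
theorem gamma_variation_bound {n : ℕ}
    (f : EuclideanSpace ℝ (Fin n) → EuclideanSpace ℝ (Fin n))
    (hf : ∀ w, AnalyticAt ℝ f w)
    (z z₁ : EuclideanSpace ℝ (Fin n))
    (hinv : IsUnit (fderiv ℝ f z))
    (hfin : BddAbove (Set.range fun k : ℕ => smaleTerm f z (k + 2)))
    (hν : ‖z - z₁‖ * smaleGamma f z < 1 - Real.sqrt 2 / 2) :
    smaleGamma f z₁ ≤
      smaleGamma f z /
        ((1 - ‖z - z₁‖ * smaleGamma f z) * psi (‖z - z₁‖ * smaleGamma f z)) := by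
  set γ := smaleGamma f z
  set u := ‖z - z₁‖ * γ
  have hf' : ContDiff ℝ ∞ f := AnalyticOnNhd.contDiff fun w _ ↦ hf w
  have hγ : 0 ≤ γ := smaleGamma_nonneg
  have h1u : 0 < 1 - u := by linarith [Real.sqrt_nonneg 2]
  have hψ : 0 < psi u := psi_pos hν
  have hψ1 : psi u ≤ 1 := psi_le_one (by positivity) (by linarith)
  have hg : AnalyticOnNhd ℝ (dfInv f z ∘ f) univ := fun w _ ↦ ((dfInv f z).analyticAt _).comp (hf w)
  have hA := norm_iteratedFDeriv_dfInv_comp_le hf' hinv hfin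
  have hinvL := norm_ring_inverse_fderiv_le_of_le_factorial_mul_pow (z₁ := z₁) hg hγ hA
    (fderiv_dfInv_comp_self (hf'.differentiable (by simp)) hinv) hν
  have hD := norm_iteratedFDeriv_le_of_le_factorial_mul_pow (z₁ := z₁) hg hγ hA (by linarith)
  refine ciSup_le fun m ↦ (smaleTerm_le_iff (by positivity) m).2 ?_
  rw [dfInv_compContinuousMultilinearMap_eq hf' hinv]
  calc _ ≤ ‖Ring.inverse (fderiv ℝ (dfInv f z ∘ f) z₁)‖ *
        ‖iteratedFDeriv ℝ (m + 2) (dfInv f z ∘ f) z₁‖ / (m + 2)! := by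
        gcongr; exact ContinuousLinearMap.norm_compContinuousMultilinearMap_le _ _
    _ ≤ (1 - u) ^ 2 / psi u * ((m + 1 + 1)! * γ ^ (m + 1) * (1 / (1 - u) ^ (m + 1 + 2))) /
        (m + 2)! := by gcongr; exact hD (m + 1)
    _ = (γ / (1 - u)) ^ (m + 1) / psi u := by
        rw [pow_add (1 - u) (m + 1) 2, div_pow]; field_simp
    _ ≤ (γ / (1 - u)) ^ (m + 1) / psi u ^ (m + 1) := by
        gcongr; exact pow_le_of_le_one hψ.le hψ1 (by omega)
    _ = (γ / ((1 - u) * psi u)) ^ (m + 1) := by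
        rw [div_pow, div_pow, mul_pow, div_div]

end
end
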